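/- Let f be a cubic surface of rank exactly 3. Then either f has exactly one singular point in P^3(ℂ), or f has infinitely many singular points in P^3(ℂ). The first case occurs precisely when the three linear forms in a minimal decomposition f = l_1^3 + l_2^3 + l_3^3 are linearly independent. -/

import Mathlib

open MvPolynomial

/-- The linear form with coefficient vector `v`. -/
noncomputable def linForm {n : ℕ} (v : Fin n → ℂ) : MvPolynomial (Fin n) ℂ :=
  ∑ i, C (v i) * X i

/-- `f` can be written as a sum of `r` `d`-th powers of linear forms. -/
def hasDecomp {n : ℕ} (d : ℕ) (f : MvPolynomial (Fin n) ℂ) (r : ℕ) : Prop :=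
  ∃ v : Fin r → Fin n → ℂ, f = ∑ j, (linForm (v j)) ^ d

/-- `f` has rank exactly `r` with respect to `d`-th powers of linear forms. -/
def hasRank {n : ℕ} (d : ℕ) (f : MvPolynomial (Fin n) ℂ) (r : ℕ) : Prop :=
  hasDecomp d f r ∧ ∀ s, s < r → ¬ hasDecomp d f s

open Projectivization Module

private lemma pderiv_linForm {n : ℕ} (w : Fin n → ℂ) (i : Fin n) :
    pderiv i (linForm w) = C (w i) := by
  rw [linForm, map_sum, Finset.sum_eq_single i]
  · simp
  · intro b _ hb
    simp [pderiv_mul, pderiv_X_of_ne hb]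
  · simp

private lemma eval_linForm {n : ℕ} (w : Fin n → ℂ) (x : Fin n → ℂ) :
    eval x (linForm w) = ∑ k, w k * x k := by
  simp [linForm]

private lemma eval_pderiv (v : Fin 3 → Fin 4 → ℂ) (x : Fin 4 → ℂ) (i : Fin 4) :
    eval x (pderiv i (∑ j, (linForm (v j)) ^ 3)) =
      ∑ j, 3 * (∑ k, v j k * x k) ^ 2 * v j i := by
  rw [map_sum, map_sum]
  refine Finset.sum_congr rfl fun j _ => ?_
  rw [pderiv_pow, pderiv_linForm]
  simp [eval_linForm]

private noncomputable def Lmap (v : Fin 3 → Fin 4 → ℂ) : (Fin 4 → ℂ) →ₗ[ℂ] (Fin 3 → ℂ) :=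
  Matrix.mulVecLin (Matrix.of v)

private lemma mem_ker_Lmap (v : Fin 3 → Fin 4 → ℂ) (x : Fin 4 → ℂ) :
    x ∈ LinearMap.ker (Lmap v) ↔ ∀ j, ∑ k, v j k * x k = 0 := by
  simp [Lmap, LinearMap.mem_ker, Matrix.mulVecLin_apply, Matrix.mulVec, dotProduct,
    _root_.funext_iff]

private lemma sing_of_mem_ker (v : Fin 3 → Fin 4 → ℂ) (x : Fin 4 → ℂ)
    (hx : x ∈ LinearMap.ker (Lmap v)) (i : Fin 4) :
    eval x (pderiv i (∑ j, (linForm (v j)) ^ 3)) = 0 := by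
  rw [eval_pderiv]
  rw [mem_ker_Lmap] at hx
  refine Finset.sum_eq_zero fun j _ => ?_
  rw [hx j]; ring

private lemma mem_ker_of_sing (v : Fin 3 → Fin 4 → ℂ) (hv : LinearIndependent ℂ v)
    (x : Fin 4 → ℂ) (hx : ∀ i, eval x (pderiv i (∑ j, (linForm (v j)) ^ 3)) = 0) :
    x ∈ LinearMap.ker (Lmap v) := by
  have h0 : ∑ j, ((∑ k, v j k * x k) ^ 2) • v j = 0 := by
    funext i
    have hxi := hx i
    rw [eval_pderiv] at hxi
    have h3 : (3 : ℂ) * ∑ j, (∑ k, v j k * x k) ^ 2 * v j i = 0 := by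
      rw [Finset.mul_sum, ← hxi]
      exact Finset.sum_congr rfl fun j _ => by ring
    have h4 : ∑ j, (∑ k, v j k * x k) ^ 2 * v j i = 0 := by
      rcases mul_eq_zero.mp h3 with h | h
      · norm_num at h
      · exact h
    simpa [Finset.sum_apply] using h4
  have hz := Fintype.linearIndependent_iff.mp hv _ h0
  rw [mem_ker_Lmap]
  intro j
  have := hz j
  exact pow_eq_zero_iff (by norm_num) |>.mp this

private lemma unique_of_indep (v : Fin 3 → Fin 4 → ℂ) (hv : LinearIndependent ℂ v) :
    ∃! x : Projectivization ℂ (Fin 4 → ℂ),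
      ∀ i, eval x.rep (pderiv i (∑ j, (linForm (v j)) ^ 3)) = 0 := by
  have hrank3 : finrank ℂ (LinearMap.range (Lmap v)) = 3 := by
    have h := hv.rank_matrix (M := Matrix.of v)
    simp only [Matrix.rank, Lmap] at h
    exact h
  have hker : finrank ℂ (LinearMap.ker (Lmap v)) = 1 := by
    have h := LinearMap.finrank_range_add_finrank_ker (Lmap v)
    have h4 : finrank ℂ (Fin 4 → ℂ) = 4 := by simp
    rw [hrank3, h4] at h
    omega
  obtain ⟨p, hp0, hpspan⟩ := finrank_eq_one_iff'.mp hker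
  have hp0' : (p : Fin 4 → ℂ) ≠ 0 := by simpa using hp0
  refine ⟨Projectivization.mk ℂ (p : Fin 4 → ℂ) hp0', ?_, ?_⟩
  · obtain ⟨a, ha⟩ := Projectivization.exists_smul_eq_mk_rep ℂ (p : Fin 4 → ℂ) hp0'
    intro i
    apply sing_of_mem_ker
    rw [← ha]
    exact Submodule.smul_mem _ _ p.2
  · intro y hy
    have hyk : y.rep ∈ LinearMap.ker (Lmap v) := mem_ker_of_sing v hv y.rep hy
    obtain ⟨c, hc⟩ := hpspan ⟨y.rep, hyk⟩
    have hc' : c • (p : Fin 4 → ℂ) = y.rep := congrArg Subtype.val hc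
    have hmk : Projectivization.mk ℂ y.rep y.rep_nonzero
        = Projectivization.mk ℂ (p : Fin 4 → ℂ) hp0' :=
      (Projectivization.mk_eq_mk_iff' ℂ _ _ _ _).mpr ⟨c, hc'⟩
    rw [← Projectivization.mk_rep y]
    exact hmk

private lemma infinite_of_dep (v : Fin 3 → Fin 4 → ℂ) (hv : ¬ LinearIndependent ℂ v) :
    {x : Projectivization ℂ (Fin 4 → ℂ) |
      ∀ i, eval x.rep (pderiv i (∑ j, (linForm (v j)) ^ 3)) = 0}.Infinite := by
  have hrk : finrank ℂ (LinearMap.range (Lmap v)) ≤ 2 := by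
    have h1 : finrank ℂ (LinearMap.range (Lmap v))
        = finrank ℂ (Submodule.span ℂ (Set.range v)) := by
      have h := Matrix.rank_eq_finrank_span_row (Matrix.of v)
      simp only [Matrix.rank, Lmap] at h
      exact h
    have h2 : finrank ℂ (Submodule.span ℂ (Set.range v)) ≤ 3 := by
      simpa [Set.finrank] using finrank_range_le_card v
    have h3 : finrank ℂ (Submodule.span ℂ (Set.range v)) ≠ 3 := by
      intro h
      exact hv (linearIndependent_iff_card_eq_finrank_span.mpr (by simp [Set.finrank, h]))
    omega
  have hker : 2 ≤ finrank ℂ (LinearMap.ker (Lmap v)) := by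
    have h := LinearMap.finrank_range_add_finrank_ker (Lmap v)
    have h4 : finrank ℂ (Fin 4 → ℂ) = 4 := by simp
    rw [h4] at h
    omega
  obtain ⟨g, hg⟩ := exists_linearIndependent_of_le_finrank hker
  have hg' : LinearIndependent ℂ (fun t : Fin 2 => ((g t : Fin 4 → ℂ))) :=
    hg.map' (LinearMap.ker (Lmap v)).subtype (Submodule.ker_subtype _)
  set p : Fin 4 → ℂ := (g 0 : Fin 4 → ℂ) with hp
  set q : Fin 4 → ℂ := (g 1 : Fin 4 → ℂ) with hq
  have key : ∀ c : ℂ, p + c • q ≠ 0 := by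
    intro c hc
    have hsum : ∑ t, (![1, c] t) • (fun t : Fin 2 => ((g t : Fin 4 → ℂ))) t = 0 := by
      rw [Fin.sum_univ_two]
      simpa [p, q] using hc
    have := Fintype.linearIndependent_iff.mp hg' ![1, c] hsum 0
    simp at this
  have inj : Function.Injective (fun c : ℂ => Projectivization.mk ℂ (p + c • q) (key c)) := by
    intro c c' h
    simp only at h
    rw [Projectivization.mk_eq_mk_iff'] at h
    obtain ⟨a, ha⟩ := h
    have hvec : (a - 1) • p + (a * c' - c) • q = 0 := by
      linear_combination (norm := module) ha
    have hsum : ∑ t, (![a - 1, a * c' - c] t) • (fun t : Fin 2 => ((g t : Fin 4 → ℂ))) t = 0 := by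
      rw [Fin.sum_univ_two]
      simpa [p, q] using hvec
    have hz := Fintype.linearIndependent_iff.mp hg' ![a - 1, a * c' - c] hsum
    have h0 := hz 0
    have h1 := hz 1
    simp at h0 h1
    have ha1 : a = 1 := sub_eq_zero.mp h0
    rw [ha1, one_mul] at h1
    rw [sub_eq_zero] at h1
    exact h1.symm
  apply Set.infinite_of_injective_forall_mem inj
  intro c
  obtain ⟨a, ha⟩ := Projectivization.exists_smul_eq_mk_rep ℂ (p + c • q) (key c)
  intro i
  apply sing_of_mem_ker
  rw [← ha]
  exact Submodule.smul_mem _ _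
    (Submodule.add_mem _ (g 0).2 (Submodule.smul_mem _ _ (g 1).2))

theorem stmt6 (f : MvPolynomial (Fin 4) ℂ) (hhom : f.IsHomogeneous 3)
    (hrank : hasRank 3 f 3) :
    ((∃! x : Projectivization ℂ (Fin 4 → ℂ), ∀ i, eval x.rep (pderiv i f) = 0) ∨
      {x : Projectivization ℂ (Fin 4 → ℂ) | ∀ i, eval x.rep (pderiv i f) = 0}.Infinite) ∧
    ∀ v : Fin 3 → Fin 4 → ℂ, f = ∑ j, (linForm (v j)) ^ 3 →
      ((∃! x : Projectivization ℂ (Fin 4 → ℂ), ∀ i, eval x.rep (pderiv i f) = 0) ↔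
        LinearIndependent ℂ v) := by
  obtain ⟨v0, hf0⟩ := hrank.1
  constructor
  · by_cases hv : LinearIndependent ℂ v0
    · left; rw [hf0]; exact unique_of_indep v0 hv
    · right; rw [hf0]; exact infinite_of_dep v0 hv
  · intro v hf
    constructor
    · intro hE
      by_contra hv
      have hinf := infinite_of_dep v hv
      rw [← hf] at hinf
      obtain ⟨a, ha, b, hb, hab⟩ := hinf.nontrivial
      exact hab (hE.unique ha hb)
    · intro hv
      rw [hf]
      exact unique_of_indep v hv
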